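/- Define Γ : [0, π/2]⁶ → ℝ by Γ(θ₁, …, θ₆) = Σ over pairs of subsets A ⊆ {1,2,3}, B ⊆ {4,5,6} with |A| = |B| of (∏_{i ∈ A∪B} sin θ_i) · (∏_{i ∉ A∪B} cos θ_i) — a sum of 20 monomials, including cos θ₁⋯cos θ₆ and sin θ₁⋯sin θ₆. Then the maximum of Γ over [0, π/2]⁶ equals 5/2, and it is attained at θ₁ = θ₂ = ⋯ = θ₆ = π/4. -/
import Mathlib


open Real
open scoped BigOperators

noncomputable section

/-- `Γ(θ₁,…,θ₆) = Σ_{A ⊆ {1,2,3}, B ⊆ {4,5,6}, |A| = |B|}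
(∏_{i ∈ A∪B} sin θᵢ) (∏_{i ∉ A∪B} cos θᵢ)`, a sum of 20 monomials. -/
def GammaFun (θ : Fin 6 → ℝ) : ℝ :=
  ∑ A ∈ ({0, 1, 2} : Finset (Fin 6)).powerset,
    ∑ B ∈ ({3, 4, 5} : Finset (Fin 6)).powerset,
      if A.card = B.card then
        (∏ i ∈ A ∪ B, Real.sin (θ i)) *
          (∏ i ∈ (Finset.univ \ (A ∪ B)), Real.cos (θ i))
      else 0

lemma mysingleton_union {α : Type*} [DecidableEq α] (a : α) (s : Finset α) :
    ({a} : Finset α) ∪ s = insert a s := by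
  ext x; simp [Finset.mem_union, Finset.mem_insert]

set_option maxHeartbeats 2000000 in
lemma gamma_expand (θ : Fin 6 → ℝ) : GammaFun θ =
    (cos (θ 0) * cos (θ 1) * cos (θ 2)) * (cos (θ 3) * cos (θ 4) * cos (θ 5))
    + (sin (θ 0) * cos (θ 1) * cos (θ 2) + cos (θ 0) * sin (θ 1) * cos (θ 2) + cos (θ 0) * cos (θ 1) * sin (θ 2)) *
      (sin (θ 3) * cos (θ 4) * cos (θ 5) + cos (θ 3) * sin (θ 4) * cos (θ 5) + cos (θ 3) * cos (θ 4) * sin (θ 5))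
    + (sin (θ 0) * sin (θ 1) * cos (θ 2) + sin (θ 0) * cos (θ 1) * sin (θ 2) + cos (θ 0) * sin (θ 1) * sin (θ 2)) *
      (sin (θ 3) * sin (θ 4) * cos (θ 5) + sin (θ 3) * cos (θ 4) * sin (θ 5) + cos (θ 3) * sin (θ 4) * sin (θ 5))
    + (sin (θ 0) * sin (θ 1) * sin (θ 2)) * (sin (θ 3) * sin (θ 4) * sin (θ 5)) := by
  unfold GammaFun
  rw [show ({0,1,2} : Finset (Fin 6)).powerset = {∅, {0}, {1}, {2}, {0,1}, {0,2}, {1,2}, {0,1,2}} from by decide,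
      show ({3,4,5} : Finset (Fin 6)).powerset = {∅, {3}, {4}, {5}, {3,4}, {3,5}, {4,5}, {3,4,5}} from by decide]
  simp (config := { decide := true }) [Finset.sum_insert, Finset.prod_insert,
    Finset.card_insert_of_notMem, mysingleton_union, Finset.insert_union,
    Finset.union_insert, Finset.sdiff_eq_filter, Finset.prod_filter, Fin.prod_univ_six]
  ring

lemma sumP_le (s0 c0 s1 c1 s2 c2 : ℝ)
    (hs0 : 0 ≤ s0) (hc0 : 0 ≤ c0) (hs1 : 0 ≤ s1) (hc1 : 0 ≤ c1)
    (hs2 : 0 ≤ s2) (hc2 : 0 ≤ c2)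
    (h0 : s0 ^ 2 + c0 ^ 2 = 1) (h1 : s1 ^ 2 + c1 ^ 2 = 1) (h2 : s2 ^ 2 + c2 ^ 2 = 1) :
    (c0 * c1 * c2) ^ 2
    + (s0 * c1 * c2 + c0 * s1 * c2 + c0 * c1 * s2) ^ 2
    + (s0 * s1 * c2 + s0 * c1 * s2 + c0 * s1 * s2) ^ 2
    + (s0 * s1 * s2) ^ 2 ≤ 5 / 2 := by
  have key : (c0 * c1 * c2) ^ 2
      + (s0 * c1 * c2 + c0 * s1 * c2 + c0 * c1 * s2) ^ 2
      + (s0 * s1 * c2 + s0 * c1 * s2 + c0 * s1 * s2) ^ 2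
      + (s0 * s1 * s2) ^ 2
      = 1 + 2 * (s0 * c0 * (s1 * c1) + s0 * c0 * (s2 * c2) + s1 * c1 * (s2 * c2)) := by
    linear_combination
      (c1 ^ 2 * c2 ^ 2 + c1 ^ 2 * s2 ^ 2 + 2 * (s1 * c1 * s2 * c2) + s1 ^ 2 * c2 ^ 2 + s1 ^ 2 * s2 ^ 2) * h0
      + (c2 ^ 2 + s2 ^ 2 + 2 * (s0 * c0 * s2 * c2)) * h1
      + (1 + 2 * (s0 * c0 * s1 * c1)) * h2
  rw [key]
  have u0 : s0 * c0 ≤ 1 / 2 := by nlinarith [sq_nonneg (s0 - c0)]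
  have u1 : s1 * c1 ≤ 1 / 2 := by nlinarith [sq_nonneg (s1 - c1)]
  have u2 : s2 * c2 ≤ 1 / 2 := by nlinarith [sq_nonneg (s2 - c2)]
  have n0 : 0 ≤ s0 * c0 := mul_nonneg hs0 hc0
  have n1 : 0 ≤ s1 * c1 := mul_nonneg hs1 hc1
  have n2 : 0 ≤ s2 * c2 := mul_nonneg hs2 hc2
  have p01 : s0 * c0 * (s1 * c1) ≤ 1 / 2 * (1 / 2) := mul_le_mul u0 u1 n1 (by norm_num)
  have p02 : s0 * c0 * (s2 * c2) ≤ 1 / 2 * (1 / 2) := mul_le_mul u0 u2 n2 (by norm_num)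
  have p12 : s1 * c1 * (s2 * c2) ≤ 1 / 2 * (1 / 2) := mul_le_mul u1 u2 n2 (by norm_num)
  linarith

/-- The maximum of `Γ` over `[0, π/2]⁶` equals `5/2`, attained at
`θ₁ = ⋯ = θ₆ = π/4`. -/
theorem gammaFun_max :
    (∀ θ : Fin 6 → ℝ, (∀ i, θ i ∈ Set.Icc 0 (π / 2)) → GammaFun θ ≤ 5 / 2) ∧
      GammaFun (fun _ => π / 4) = 5 / 2 := by
  constructor
  · intro θ hθ
    have hs : ∀ i, 0 ≤ sin (θ i) := fun i =>
      Real.sin_nonneg_of_nonneg_of_le_pi (hθ i).1 (by linarith [(hθ i).2, Real.pi_pos])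
    have hc : ∀ i, 0 ≤ cos (θ i) := fun i =>
      Real.cos_nonneg_of_mem_Icc ⟨by linarith [(hθ i).1, Real.pi_pos], (hθ i).2⟩
    have hp : ∀ i, sin (θ i) ^ 2 + cos (θ i) ^ 2 = 1 := fun i => Real.sin_sq_add_cos_sq (θ i)
    have hP := sumP_le (sin (θ 0)) (cos (θ 0)) (sin (θ 1)) (cos (θ 1)) (sin (θ 2)) (cos (θ 2))
      (hs 0) (hc 0) (hs 1) (hc 1) (hs 2) (hc 2) (hp 0) (hp 1) (hp 2)
    have hQ := sumP_le (sin (θ 3)) (cos (θ 3)) (sin (θ 4)) (cos (θ 4)) (sin (θ 5)) (cos (θ 5))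
      (hs 3) (hc 3) (hs 4) (hc 4) (hs 5) (hc 5) (hp 3) (hp 4) (hp 5)
    rw [gamma_expand]
    nlinarith [sq_nonneg (cos (θ 0) * cos (θ 1) * cos (θ 2) - cos (θ 3) * cos (θ 4) * cos (θ 5)),
      sq_nonneg ((sin (θ 0) * cos (θ 1) * cos (θ 2) + cos (θ 0) * sin (θ 1) * cos (θ 2) + cos (θ 0) * cos (θ 1) * sin (θ 2))
        - (sin (θ 3) * cos (θ 4) * cos (θ 5) + cos (θ 3) * sin (θ 4) * cos (θ 5) + cos (θ 3) * cos (θ 4) * sin (θ 5))),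
      sq_nonneg ((sin (θ 0) * sin (θ 1) * cos (θ 2) + sin (θ 0) * cos (θ 1) * sin (θ 2) + cos (θ 0) * sin (θ 1) * sin (θ 2))
        - (sin (θ 3) * sin (θ 4) * cos (θ 5) + sin (θ 3) * cos (θ 4) * sin (θ 5) + cos (θ 3) * sin (θ 4) * sin (θ 5))),
      sq_nonneg (sin (θ 0) * sin (θ 1) * sin (θ 2) - sin (θ 3) * sin (θ 4) * sin (θ 5))]
  · rw [gamma_expand]
    simp only [Real.sin_pi_div_four, Real.cos_pi_div_four]
    have h : Real.sqrt 2 ^ 2 = 2 := Real.sq_sqrt (by norm_num)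
    linear_combination (5 / 16 * (Real.sqrt 2 ^ 4 + 2 * Real.sqrt 2 ^ 2 + 4)) * h
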